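/- Every solution y of the form y(x) = x^ν · p(x) with p a polynomial of the third-order ODE x² y''' + x(α-ν+3+x) y'' + ((α+1)(1-ν) + x(n+α-ν+2)) y' + (n+m+α)(1-m-ν) y = 0 (with ν ∉ ℤ) has p proportional to the hypergeometric polynomial ₂F₂(-m+1, n+m+α+ν; ν+1, α+ν+1; -x). -/

import Mathlib

set_option maxHeartbeats 1000000


open MeasureTheory Set

/-- Pochhammer symbol `(z)_n = z(z+1)⋯(z+n-1)`. -/
noncomputable def poch (z : ℝ) (n : ℕ) : ℝ := ∏ i ∈ Finset.range n, (z + i)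

/-- The generalized hypergeometric series `₂F₂(a₁,a₂;b₁,b₂;x)`. -/
noncomputable def F2 (a₁ a₂ b₁ b₂ x : ℝ) : ℝ :=
  ∑' k : ℕ, poch a₁ k * poch a₂ k / (poch b₁ k * poch b₂ k) * x ^ k / k.factorial

open Polynomial in
noncomputable def Pop (μ : ℝ) (q : Polynomial ℝ) : Polynomial ℝ := C μ * q + X * derivative q

open Polynomial in
lemma pop_hasDerivAt (μ : ℝ) (q : Polynomial ℝ) {x : ℝ} (hx : 0 < x) :
    HasDerivAt (fun y : ℝ => y ^ μ * q.eval y) (x ^ (μ - 1) * (Pop μ q).eval x) x := by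
  have h1 : HasDerivAt (fun y : ℝ => y ^ μ) (μ * x ^ (μ - 1)) x :=
    Real.hasDerivAt_rpow_const (Or.inl hx.ne')
  have h2 := q.hasDerivAt x
  have h : HasDerivAt (fun y : ℝ => y ^ μ * q.eval y) _ x := h1.mul h2
  have hxμ : x ^ μ = x ^ (μ - 1) * x := by
    rw [← Real.rpow_add_one hx.ne']; ring_nf
  convert h using 1
  simp only [Pop, eval_add, eval_mul, eval_C, eval_X]
  rw [hxμ]; ring

lemma deriv_step (μ : ℝ) (q : Polynomial ℝ) (g : ℝ → ℝ)
    (hg : ∀ x ∈ Set.Ioi (0:ℝ), g x = x ^ μ * q.eval x) :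
    ∀ x ∈ Set.Ioi (0:ℝ), deriv g x = x ^ (μ - 1) * (Pop μ q).eval x := by
  intro x hx
  have hev : g =ᶠ[nhds x] fun y => y ^ μ * q.eval y :=
    Filter.eventuallyEq_of_mem (isOpen_Ioi.mem_nhds hx) hg
  rw [hev.deriv_eq, (pop_hasDerivAt μ q hx).deriv]

open Polynomial in
lemma pop_coeff (μ : ℝ) (q : Polynomial ℝ) (k : ℕ) :
    (Pop μ q).coeff k = (μ + k) * q.coeff k := by
  cases k with
  | zero => simp [Pop, mul_coeff_zero]
  | succ k => simp [Pop, coeff_X_mul, coeff_derivative]; ring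

lemma poch_succ (z : ℝ) (k : ℕ) : poch z (k+1) = poch z k * (z + k) :=
  Finset.prod_range_succ _ _

noncomputable def hgc (m n : ℕ) (α ν : ℝ) (k : ℕ) : ℝ :=
  poch (-(m:ℝ)+1) k * poch ((n:ℝ)+m+α+ν) k /
    (poch (ν+1) k * poch (α+ν+1) k * k.factorial)

/-- Every solution `y(x) = x^ν p(x)` (with `p` a polynomial, `ν ∉ ℤ`) of the third-order ODE
`x²y''' + x(α-ν+3+x)y'' + ((α+1)(1-ν)+x(n+α-ν+2))y' + (n+m+α)(1-m-ν)y = 0`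
has `p` proportional to `₂F₂(-m+1, n+m+α+ν; ν+1, α+ν+1; -x)`. -/
theorem polynomial_solution_of_ODE (n m : ℕ) (hn : 1 ≤ n) (hm : 1 ≤ m) (hnm : m ≤ n + 1)
    (α ν : ℝ) (hα : -1 < α) (hαν : -1 < α + ν) (hν : ∀ k : ℤ, ν ≠ (k : ℝ))
    (p : Polynomial ℝ)
    (hsol : ∀ x : ℝ, 0 < x →
      x ^ 2 * iteratedDeriv 3 (fun y => y ^ ν * p.eval y) x +
        x * (α - ν + 3 + x) * iteratedDeriv 2 (fun y => y ^ ν * p.eval y) x +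
        ((α + 1) * (1 - ν) + x * ((n : ℝ) + α - ν + 2)) *
          deriv (fun y => y ^ ν * p.eval y) x +
        ((n : ℝ) + (m : ℝ) + α) * (1 - (m : ℝ) - ν) * (x ^ ν * p.eval x) = 0) :
    ∃ c : ℝ, ∀ x : ℝ,
      p.eval x = c * F2 (-(m : ℝ) + 1) ((n : ℝ) + (m : ℝ) + α + ν) (ν + 1) (α + ν + 1) (-x) := by
  classical
  set f : ℝ → ℝ := fun y => y ^ ν * p.eval y with hf
  set P1 := Pop ν p with hP1
  set P2 := Pop (ν - 1) P1 with hP2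
  set P3 := Pop (ν - 1 - 1) P2 with hP3
  have h1 : ∀ x ∈ Set.Ioi (0:ℝ), deriv f x = x ^ (ν - 1) * P1.eval x :=
    deriv_step ν p f (fun x hx => rfl)
  have h2 : ∀ x ∈ Set.Ioi (0:ℝ), deriv (deriv f) x = x ^ (ν - 1 - 1) * P2.eval x :=
    deriv_step (ν - 1) P1 (deriv f) h1
  have h3 : ∀ x ∈ Set.Ioi (0:ℝ), deriv (deriv (deriv f)) x
      = x ^ (ν - 1 - 1 - 1) * P3.eval x :=
    deriv_step (ν - 1 - 1) P2 (deriv (deriv f)) h2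
  set Q : Polynomial ℝ := P3 + Polynomial.C (α - ν + 3) * P2 + Polynomial.X * P2
      + Polynomial.C ((α + 1) * (1 - ν)) * P1
      + Polynomial.C ((n : ℝ) + α - ν + 2) * (Polynomial.X * P1)
      + Polynomial.C (((n : ℝ) + m + α) * (1 - m - ν)) * (Polynomial.X * p) with hQdef
  have hQ0 : Q = 0 := by
    apply Polynomial.eq_zero_of_infinite_isRoot
    apply Set.Infinite.mono _ (Set.Ioi_infinite (0:ℝ))
    intro x hx
    have hxp : (0:ℝ) < x := hx
    have E := hsol x hxp
    have hi3 : iteratedDeriv 3 f x = x ^ (ν - 1 - 1 - 1) * P3.eval x := by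
      rw [show (3:ℕ) = 2 + 1 from rfl, iteratedDeriv_succ,
        show (2:ℕ) = 1 + 1 from rfl, iteratedDeriv_succ, iteratedDeriv_one]
      exact h3 x hx
    have hi2 : iteratedDeriv 2 f x = x ^ (ν - 1 - 1) * P2.eval x := by
      rw [show (2:ℕ) = 1 + 1 from rfl, iteratedDeriv_succ, iteratedDeriv_one]
      exact h2 x hx
    rw [hi3, hi2, h1 x hx] at E
    have hx2 : x * x ^ (ν - 1 - 1) = x ^ (ν - 1) := by
      rw [mul_comm, ← Real.rpow_add_one hxp.ne']; ring_nf
    have hx3 : x ^ 2 * x ^ (ν - 1 - 1 - 1) = x ^ (ν - 1) := by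
      rw [← Real.rpow_natCast x 2, ← Real.rpow_add hxp]
      congr 1; push_cast; ring
    have hx0 : x ^ ν = x ^ (ν - 1) * x := by
      rw [← Real.rpow_add_one hxp.ne']; ring_nf
    have key : x ^ (ν - 1) * Q.eval x = 0 := by
      rw [hQdef]
      simp only [Polynomial.eval_add, Polynomial.eval_mul, Polynomial.eval_C, Polynomial.eval_X]
      linear_combination E - (P3.eval x) * hx3 - ((α - ν + 3 + x) * P2.eval x) * hx2
        - (((n:ℝ) + m + α) * (1 - m - ν) * p.eval x) * hx0
    have hT : x ^ (ν - 1) ≠ 0 := (Real.rpow_pos_of_pos hxp _).ne'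
    have := mul_eq_zero.mp key
    simpa [Polynomial.IsRoot, hT] using this
  -- coefficient recurrence
  have hrec : ∀ k : ℕ, ((k:ℝ)+1)*(ν+k+1)*(α+ν+k+1) * p.coeff (k+1)
      + (((k:ℝ)+1)-m)*((n:ℝ)+m+α+ν+k) * p.coeff k = 0 := by
    intro k
    have hc : Q.coeff (k+1) = 0 := by rw [hQ0]; simp
    rw [hQdef] at hc
    simp only [Polynomial.coeff_add, Polynomial.coeff_C_mul, Polynomial.coeff_X_mul,
      hP3, hP2, hP1, pop_coeff] at hc
    push_cast at hc
    linear_combination hc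
  -- the hypergeometric coefficients
  have hcdef : ∀ k, hgc m n α ν k = poch (-(m:ℝ)+1) k * poch ((n:ℝ)+m+α+ν) k /
      (poch (ν+1) k * poch (α+ν+1) k * k.factorial) := fun k => rfl
  have hpν : ∀ k : ℕ, poch (ν+1) k ≠ 0 := by
    intro k
    apply Finset.prod_ne_zero_iff.mpr
    intro i _
    intro h
    exact hν (-(1+i)) (by push_cast; linarith)
  have hpαν : ∀ k : ℕ, poch (α+ν+1) k ≠ 0 := by
    intro k
    apply Finset.prod_ne_zero_iff.mpr
    intro i _
    have hi : (0:ℝ) ≤ i := Nat.cast_nonneg i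
    exact ne_of_gt (by linarith)
  have hcrec : ∀ k : ℕ, ((k:ℝ)+1)*(ν+k+1)*(α+ν+k+1) * hgc m n α ν (k+1)
      = (((k:ℝ)+1)-m)*((n:ℝ)+m+α+ν+k) * hgc m n α ν k := by
    intro k
    rw [hcdef, hcdef]
    simp only [poch_succ, Nat.factorial_succ]
    have h1 := hpν k
    have h2 := hpαν k
    have h3 : (k.factorial : ℝ) ≠ 0 := Nat.cast_ne_zero.mpr k.factorial_ne_zero
    have hk0 : (0:ℝ) ≤ k := Nat.cast_nonneg k
    have h4 : ν + 1 + (k:ℝ) ≠ 0 := by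
      intro h; exact hν (-(1+k)) (by push_cast; linarith)
    have h5 : α + ν + 1 + (k:ℝ) ≠ 0 := ne_of_gt (by linarith)
    have h6 : ((k:ℝ)+1) ≠ 0 := by positivity
    push_cast
    field_simp
    ring
  -- every coefficient is determined by the first one
  have ha : ∀ k : ℕ, p.coeff k = p.coeff 0 * (-1)^k * hgc m n α ν k := by
    intro k
    induction k with
    | zero => simp [hgc, poch]
    | succ k ih =>
      have hA : ((k:ℝ)+1)*(ν+k+1)*(α+ν+k+1) ≠ 0 := by
        have e1 : ((k:ℝ)+1) ≠ 0 := by positivity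
        have e2 : (ν+k+1) ≠ 0 := by
          intro h; exact hν (-(k+1)) (by push_cast; linarith)
        have e3 : (α+ν+k+1) ≠ 0 := by
          have hk0 : (0:ℝ) ≤ k := Nat.cast_nonneg k
          exact ne_of_gt (by linarith)
        exact mul_ne_zero (mul_ne_zero e1 e2) e3
      apply mul_left_cancel₀ hA
      linear_combination hrec k + (p.coeff 0 * (-1)^k) * hcrec k
        - ((((k:ℝ)+1)-m)*((n:ℝ)+m+α+ν+k)) * ih
  -- c vanishes from index m on
  have hc0 : ∀ k : ℕ, m ≤ k → hgc m n α ν k = 0 := by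
    intro k hk
    have hz : poch (-(m:ℝ)+1) k = 0 := by
      apply Finset.prod_eq_zero (i := m - 1)
      · exact Finset.mem_range.mpr (by omega)
      · have : ((m - 1 : ℕ) : ℝ) = (m : ℝ) - 1 := by
          push_cast [Nat.cast_sub hm]; ring
        rw [this]; ring
    simp [hgc, hz]
  refine ⟨p.coeff 0, fun x => ?_⟩
  set Nn := max m (p.natDegree + 1) with hNn
  have hdeg : p.natDegree < Nn := lt_of_lt_of_le (Nat.lt_succ_self _) (le_max_right _ _)
  have hev : p.eval x = ∑ k ∈ Finset.range Nn, p.coeff k * x ^ k :=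
    Polynomial.eval_eq_sum_range' hdeg x
  have hterm : ∀ k : ℕ, poch (-(m:ℝ)+1) k * poch ((n:ℝ)+m+α+ν) k /
      (poch (ν+1) k * poch (α+ν+1) k) * (-x) ^ k / k.factorial = hgc m n α ν k * (-x)^k := by
    intro k
    rw [hcdef]
    field_simp
  have hF2 : F2 (-(m : ℝ) + 1) ((n : ℝ) + (m : ℝ) + α + ν) (ν + 1) (α + ν + 1) (-x)
      = ∑ k ∈ Finset.range Nn, hgc m n α ν k * (-x)^k := by
    rw [F2]
    rw [tsum_eq_sum (s := Finset.range Nn) (fun k hk => by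
      have hmk : m ≤ k := le_trans (le_max_left _ _)
        (le_of_not_gt fun h => hk (Finset.mem_range.mpr h))
      rw [hterm k, hc0 k hmk, zero_mul])]
    exact Finset.sum_congr rfl (fun k _ => hterm k)
  rw [hev, hF2, Finset.mul_sum]
  apply Finset.sum_congr rfl
  intro k _
  rw [ha k, neg_pow]
  ring
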